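/- arXiv:2307.08623 — 4 statements merged into one kernel-verified Lean document; each statement's English description precedes it below -/
import Mathlib

section
/- Assume 2 ≤ n, 2 ≤ m and n ≠ m. If π : (Fin n × Fin m) ≃ (Fin n × Fin m) and ρ : (Fin n ⊕ (Fin m ⊕ Unit)) ≃ (Fin n ⊕ (Fin m ⊕ Unit)) satisfy Inc (π v) (ρ e) ↔ Inc v e for all v, e, then ρ preserves hyperedge types: for every i : Fin n there is i' with ρ (Sum.inl i) = Sum.inl i', for every j : Fin m there is j' with ρ (Sum.inr (Sum.inl j)) = Sum.inr (Sum.inl j'), and ρ (Sum.inr (Sum.inr ())) = Sum.inr (Sum.inr ()). -/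
/-- The incidence relation of the table hypergraph. -/
def Inc {n m : ℕ} : Fin n × Fin m → (Fin n ⊕ (Fin m ⊕ Unit)) → Prop
  | (i, _), Sum.inl i' => i = i'
  | (_, j), Sum.inr (Sum.inl j') => j = j'
  | _, Sum.inr (Sum.inr _) => True

instance IncDec {n m : ℕ} (v : Fin n × Fin m) (e : Fin n ⊕ (Fin m ⊕ Unit)) :
    Decidable (Inc v e) := by
  obtain ⟨a, b⟩ := v
  rcases e with i | j | u
  · exact decEq a i
  · exact decEq b j
  · exact .isTrue trivial

/-- The number of vertices incident to a hyperedge. -/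
def incCard (n m : ℕ) (e : Fin n ⊕ (Fin m ⊕ Unit)) : ℕ :=
  Fintype.card {v : Fin n × Fin m // Inc v e}

lemma incCard_row {n m : ℕ} (i : Fin n) : incCard n m (Sum.inl i) = m := by
  have e : {v : Fin n × Fin m // Inc v (Sum.inl i)} ≃ Fin m :=
    { toFun := fun p => p.1.2
      invFun := fun b => ⟨(i, b), rfl⟩
      left_inv := by rintro ⟨⟨a, b⟩, hp⟩; cases hp; rfl
      right_inv := fun b => rfl }
  simpa [incCard] using Fintype.card_congr e

lemma incCard_col {n m : ℕ} (j : Fin m) : incCard n m (Sum.inr (Sum.inl j)) = n := by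
  have e : {v : Fin n × Fin m // Inc v (Sum.inr (Sum.inl j))} ≃ Fin n :=
    { toFun := fun p => p.1.1
      invFun := fun a => ⟨(a, j), rfl⟩
      left_inv := by rintro ⟨⟨a, b⟩, hp⟩; cases hp; rfl
      right_inv := fun a => rfl }
  simpa [incCard] using Fintype.card_congr e

lemma incCard_table {n m : ℕ} (u : Unit) : incCard n m (Sum.inr (Sum.inr u)) = n * m := by
  have e : {v : Fin n × Fin m // Inc v (Sum.inr (Sum.inr u))} ≃ Fin n × Fin m :=
    { toFun := fun p => p.1
      invFun := fun v => ⟨v, trivial⟩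
      left_inv := by rintro ⟨⟨a, b⟩, hp⟩; rfl
      right_inv := fun v => rfl }
  simpa [incCard] using Fintype.card_congr e

/-- If `2 ≤ n`, `2 ≤ m` and `n ≠ m`, then any incidence-preserving pair of
relabelings of the table hypergraph preserves hyperedge types: row hyperedges
go to row hyperedges, column hyperedges to column hyperedges, and the table
hyperedge to itself. -/
theorem relabeling_preserves_hyperedge_types {n m : ℕ}
    (hn : 2 ≤ n) (hm : 2 ≤ m) (hnm : n ≠ m)
    (π : (Fin n × Fin m) ≃ (Fin n × Fin m))
    (ρ : (Fin n ⊕ (Fin m ⊕ Unit)) ≃ (Fin n ⊕ (Fin m ⊕ Unit)))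
    (h : ∀ (v : Fin n × Fin m) (e : Fin n ⊕ (Fin m ⊕ Unit)),
      Inc (π v) (ρ e) ↔ Inc v e) :
    (∀ i : Fin n, ∃ i' : Fin n, ρ (Sum.inl i) = Sum.inl i') ∧
    (∀ j : Fin m, ∃ j' : Fin m, ρ (Sum.inr (Sum.inl j)) = Sum.inr (Sum.inl j')) ∧
    ρ (Sum.inr (Sum.inr ())) = Sum.inr (Sum.inr ()) := by
  have hcard : ∀ e, incCard n m (ρ e) = incCard n m e := by
    intro e
    exact Fintype.card_congr
      (Equiv.subtypeEquiv π (fun v => (h v e).symm)).symm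
  have hn0 : 0 < n := by omega
  have hm0 : 0 < m := by omega
  refine ⟨?_, ?_, ?_⟩
  · intro i
    have hc := hcard (Sum.inl i)
    rcases hρ : ρ (Sum.inl i) with i' | j' | u
    · exact ⟨i', rfl⟩
    · rw [hρ, incCard_col, incCard_row] at hc; exact absurd hc hnm
    · rw [hρ, incCard_table, incCard_row] at hc
      have h2 : 2 * m ≤ n * m := Nat.mul_le_mul_right m hn
      omega
  · intro j
    have hc := hcard (Sum.inr (Sum.inl j))
    rcases hρ : ρ (Sum.inr (Sum.inl j)) with i' | j' | u
    · rw [hρ, incCard_row, incCard_col] at hc; exact absurd hc.symm hnm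
    · exact ⟨j', rfl⟩
    · rw [hρ, incCard_table, incCard_col] at hc
      have h2 : n * 2 ≤ n * m := Nat.mul_le_mul_left n hm
      omega
  · have hc := hcard (Sum.inr (Sum.inr ()))
    rcases hρ : ρ (Sum.inr (Sum.inr ())) with i' | j' | u
    · rw [hρ, incCard_row, incCard_table] at hc
      have h2 : 2 * m ≤ n * m := Nat.mul_le_mul_right m hn
      omega
    · rw [hρ, incCard_col, incCard_table] at hc
      have h2 : n * 2 ≤ n * m := Nat.mul_le_mul_left n hm
      omega
    · cases u; rfl
end

section
/- Let T1 T2 : Fin n → Fin m → α and suppose T1 is injective as a function on pairs (all cells of T1 are pairwise distinct). If the rows multiset of T2 equals the rows multiset of T1 and the columns multiset of T2 equals the columns multiset of T1, then there exist σ ∈ Equiv.Perm (Fin n) and τ ∈ Equiv.Perm (Fin m) such that T2 = (σ, τ) • T1. -/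
/-- The action of independent row/column permutations on tables. -/
def tableSMul {n m : ℕ} {α : Type*}
    (a : Equiv.Perm (Fin n) × Equiv.Perm (Fin m))
    (T : Fin n → Fin m → α) : Fin n → Fin m → α :=
  fun i j => T (a.1⁻¹ i) (a.2⁻¹ j)

/-- The rows multiset of a table: the multiset of its row multisets. -/
def rowsMultiset {n m : ℕ} {α : Type*} (T : Fin n → Fin m → α) :
    Multiset (Multiset α) :=
  Multiset.map (fun i => Multiset.map (fun j => T i j) Finset.univ.val)
    Finset.univ.val

/-- The columns multiset of a table: the multiset of its column multisets. -/
def colsMultiset {n m : ℕ} {α : Type*} (T : Fin n → Fin m → α) :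
    Multiset (Multiset α) :=
  Multiset.map (fun j => Multiset.map (fun i => T i j) Finset.univ.val)
    Finset.univ.val

/-- If `g` is injective and `f, g` have equal multisets of values over `univ`,
then `f = g ∘ σ` for some permutation `σ`. -/
theorem exists_perm_of_map_univ_eq {k : ℕ} {β : Type*} {f g : Fin k → β}
    (hg : Function.Injective g)
    (h : Multiset.map f Finset.univ.val = Multiset.map g Finset.univ.val) :
    ∃ σ : Equiv.Perm (Fin k), ∀ i, f i = g (σ i) := by
  have hmem : ∀ i, ∃ j, g j = f i := by
    intro i
    have : f i ∈ Multiset.map g Finset.univ.val := by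
      rw [← h]
      exact Multiset.mem_map_of_mem _ (Finset.mem_univ_val i)
    obtain ⟨j, _, hj⟩ := Multiset.mem_map.mp this
    exact ⟨j, hj⟩
  choose φ hφ using hmem
  have hfinj : Function.Injective f := by
    have hnodup : (Multiset.map f Finset.univ.val).Nodup := by
      rw [h]
      exact Finset.univ.nodup.map hg
    intro a b hab
    have := Multiset.inj_on_of_nodup_map hnodup
    exact this _ (Finset.mem_univ_val a) _ (Finset.mem_univ_val b) hab
  have hφinj : Function.Injective φ := by
    intro a b hab
    apply hfinj
    rw [← hφ a, ← hφ b, hab]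
  refine ⟨Equiv.ofBijective φ (Finite.injective_iff_bijective.mp hφinj), ?_⟩
  intro i
  exact (hφ i).symm

/-- If a table `T1` has pairwise distinct cells and `T2` has the same rows
multiset and columns multiset as `T1`, then `T2` is obtained from `T1` by an
independent row/column permutation. -/
theorem table_recovery_from_multisets {n m : ℕ} {α : Type*}
    (T1 T2 : Fin n → Fin m → α)
    (hinj : Function.Injective (fun p : Fin n × Fin m => T1 p.1 p.2))
    (hrows : rowsMultiset T2 = rowsMultiset T1)
    (hcols : colsMultiset T2 = colsMultiset T1) :
    ∃ (σ : Equiv.Perm (Fin n)) (τ : Equiv.Perm (Fin m)),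
      T2 = tableSMul (σ, τ) T1 := by
  rcases Nat.eq_zero_or_pos m with hm | hm
  · subst hm
    refine ⟨1, 1, ?_⟩
    funext i j
    exact j.elim0
  rcases Nat.eq_zero_or_pos n with hn | hn
  · subst hn
    refine ⟨1, 1, ?_⟩
    funext i j
    exact i.elim0
  -- rows of T1 are pairwise distinct
  have hrowinj : Function.Injective
      (fun i => Multiset.map (fun j => T1 i j) Finset.univ.val) := by
    intro i i' h
    dsimp only at h
    by_contra hne
    have : T1 i ⟨0, hm⟩ ∈ Multiset.map (fun j => T1 i' j) Finset.univ.val := by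
      rw [← h]
      exact Multiset.mem_map_of_mem _ (Finset.mem_univ_val _)
    obtain ⟨j', _, hj'⟩ := Multiset.mem_map.mp this
    have := hinj (a₁ := (i', j')) (a₂ := (i, ⟨0, hm⟩)) hj'
    exact hne (congrArg Prod.fst this).symm
  have hcolinj : Function.Injective
      (fun j => Multiset.map (fun i => T1 i j) Finset.univ.val) := by
    intro j j' h
    dsimp only at h
    by_contra hne
    have : T1 ⟨0, hn⟩ j ∈ Multiset.map (fun i => T1 i j') Finset.univ.val := by
      rw [← h]
      exact Multiset.mem_map_of_mem _ (Finset.mem_univ_val _)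
    obtain ⟨i', _, hi'⟩ := Multiset.mem_map.mp this
    have := hinj (a₁ := (i', j')) (a₂ := (⟨0, hn⟩, j)) hi'
    exact hne (congrArg Prod.snd this).symm
  obtain ⟨σ, hσ⟩ := exists_perm_of_map_univ_eq hrowinj hrows
  obtain ⟨τ, hτ⟩ := exists_perm_of_map_univ_eq hcolinj hcols
  refine ⟨σ⁻¹, τ⁻¹, ?_⟩
  funext i j
  -- T2 i j is in row σ i of T1
  have h1 : T2 i j ∈ Multiset.map (fun j' => T1 (σ i) j') Finset.univ.val := by
    rw [← hσ i]
    exact Multiset.mem_map_of_mem _ (Finset.mem_univ_val _)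
  obtain ⟨j', _, hj'⟩ := Multiset.mem_map.mp h1
  have h2 : T2 i j ∈ Multiset.map (fun i' => T1 i' (τ j)) Finset.univ.val := by
    rw [← hτ j]
    exact Multiset.mem_map_of_mem _ (Finset.mem_univ_val _)
  obtain ⟨i', _, hi'⟩ := Multiset.mem_map.mp h2
  have heq : ((σ i : Fin n), j') = (i', (τ j : Fin m)) :=
    hinj (a₁ := (σ i, j')) (a₂ := (i', τ j)) (by simpa using hj'.trans hi'.symm)
  injection heq with e1 e2
  have : T2 i j = T1 (σ i) (τ j) := by rw [← hj', e2]
  simpa [tableSMul] using this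
end

section
/- Maximal invariance of the (rows multiset, columns multiset) representation on tables with distinct cells: let T1 T2 : Fin n → Fin m → α with T1 injective as a function on pairs. Then (rows multiset of T2 = rows multiset of T1 ∧ columns multiset of T2 = columns multiset of T1) if and only if there exist σ ∈ Equiv.Perm (Fin n) and τ ∈ Equiv.Perm (Fin m) such that T2 = (σ, τ) • T1. -/
/-- If two tuples have equal multisets of values, they differ by a permutation
of indices. -/
lemma exists_comp_eq_of_map_eq {n : ℕ} {β : Type*} (f g : Fin n → β)
    (h : Multiset.map g Finset.univ.val = Multiset.map f Finset.univ.val) :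
    ∃ σ : Equiv.Perm (Fin n), ∀ i, g i = f (σ i) := by
  classical
  have hcard : ∀ b : β, Fintype.card {a // f a = b} = Fintype.card {a // g a = b} := by
    intro b
    rw [Fintype.card_subtype, Fintype.card_subtype]
    have := congrArg (Multiset.count b) h
    simp only [Multiset.count_map] at this
    simp only [Finset.card, Finset.filter_val]
    rw [Multiset.filter_congr (fun x _ => show (f x = b) ↔ (b = f x) from eq_comm),
        Multiset.filter_congr (fun x _ => show (g x = b) ↔ (b = g x) from eq_comm)]
    exact this.symm
  let E : ∀ b, {a // f a = b} ≃ {a // g a = b} := fun b => Fintype.equivOfCardEq (hcard b)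
  let e : Fin n ≃ Fin n :=
    (Equiv.sigmaFiberEquiv f).symm.trans ((Equiv.sigmaCongrRight E).trans (Equiv.sigmaFiberEquiv g))
  have key : ∀ a, g (e a) = f a := by
    intro a
    have : e a = (E (f a) ⟨a, rfl⟩).1 := rfl
    rw [this]
    exact (E (f a) ⟨a, rfl⟩).2
  exact ⟨e.symm, fun i => by rw [← key (e.symm i), Equiv.apply_symm_apply]⟩

/-- Mapping a permutation over `Finset.univ.val` gives back `Finset.univ.val`. -/
lemma map_univ_perm {n : ℕ} (e : Equiv.Perm (Fin n)) :
    Multiset.map (⇑e) Finset.univ.val = Finset.univ.val := by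
  have := congrArg Finset.val (Finset.map_univ_equiv e)
  simp only [Finset.map_val] at this
  exact this

/-- Maximal invariance of the (rows multiset, columns multiset) representation
on tables with pairwise distinct cells: `T2` has the same rows and columns
multisets as `T1` iff `T2` is obtained from `T1` by an independent row/column
permutation. -/
theorem multiset_representation_maximally_invariant {n m : ℕ} {α : Type*}
    (T1 T2 : Fin n → Fin m → α)
    (hinj : Function.Injective (fun p : Fin n × Fin m => T1 p.1 p.2)) :
    (rowsMultiset T2 = rowsMultiset T1 ∧ colsMultiset T2 = colsMultiset T1) ↔
      ∃ (σ : Equiv.Perm (Fin n)) (τ : Equiv.Perm (Fin m)),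
        T2 = tableSMul (σ, τ) T1 := by
  constructor
  · rintro ⟨hrows, hcols⟩
    obtain ⟨σ, hσ⟩ := exists_comp_eq_of_map_eq
      (fun i => Multiset.map (fun j => T1 i j) Finset.univ.val)
      (fun i => Multiset.map (fun j => T2 i j) Finset.univ.val) hrows
    obtain ⟨τ, hτ⟩ := exists_comp_eq_of_map_eq
      (fun j => Multiset.map (fun i => T1 i j) Finset.univ.val)
      (fun j => Multiset.map (fun i => T2 i j) Finset.univ.val) hcols
    refine ⟨σ⁻¹, τ⁻¹, funext fun i => funext fun j => ?_⟩
    have hrow : T2 i j ∈ Multiset.map (fun j' => T1 (σ i) j') Finset.univ.val := by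
      rw [← hσ i]
      exact Multiset.mem_map.2 ⟨j, Finset.mem_univ_val j, rfl⟩
    have hcol : T2 i j ∈ Multiset.map (fun i' => T1 i' (τ j)) Finset.univ.val := by
      rw [← hτ j]
      exact Multiset.mem_map.2 ⟨i, Finset.mem_univ_val i, rfl⟩
    obtain ⟨j', _, hj'⟩ := Multiset.mem_map.1 hrow
    obtain ⟨i', _, hi'⟩ := Multiset.mem_map.1 hcol
    have : T1 (σ i) j' = T1 i' (τ j) := by rw [hj', hi']
    have hpair : ((σ i, j') : Fin n × Fin m) = (i', τ j) := hinj this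
    have h2 : j' = τ j := congrArg Prod.snd hpair
    show T2 i j = T1 ((σ⁻¹)⁻¹ i) ((τ⁻¹)⁻¹ j)
    rw [inv_inv, inv_inv, ← hj', h2]
  · rintro ⟨σ, τ, rfl⟩
    constructor
    · show Multiset.map (fun i => Multiset.map (fun j => T1 (σ⁻¹ i) (τ⁻¹ j)) Finset.univ.val)
        Finset.univ.val = _
      have inner : ∀ r : Fin n, Multiset.map (fun j => T1 r (τ⁻¹ j)) Finset.univ.val
          = Multiset.map (fun j => T1 r j) Finset.univ.val := by
        intro r
        conv_rhs => rw [← map_univ_perm τ⁻¹]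
        rw [Multiset.map_map]
        rfl
      simp only [inner]
      conv_rhs => rw [rowsMultiset, ← map_univ_perm σ⁻¹, Multiset.map_map]
      rfl
    · show Multiset.map (fun j => Multiset.map (fun i => T1 (σ⁻¹ i) (τ⁻¹ j)) Finset.univ.val)
        Finset.univ.val = _
      have inner : ∀ c : Fin m, Multiset.map (fun i => T1 (σ⁻¹ i) c) Finset.univ.val
          = Multiset.map (fun i => T1 i c) Finset.univ.val := by
        intro c
        conv_rhs => rw [← map_univ_perm σ⁻¹]
        rw [Multiset.map_map]
        rfl
      simp only [inner]
      conv_rhs => rw [colsMultiset, ← map_univ_perm τ⁻¹, Multiset.map_map]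
      rfl
end

section
/- Combinatorial form of the maximal invariance theorem: for tables T1 T2 : Fin n → Fin m → α, there exist σ ∈ Equiv.Perm (Fin n) and τ ∈ Equiv.Perm (Fin m) with T2 = (σ, τ) • T1 if and only if there exist π : (Fin n × Fin m) ≃ (Fin n × Fin m) and ρ : (Fin n ⊕ (Fin m ⊕ Unit)) ≃ (Fin n ⊕ (Fin m ⊕ Unit)) such that ρ maps row hyperedges to row hyperedges and column hyperedges to column hyperedges, Inc (π v) (ρ e) ↔ Inc v e for all v and e, and T2 (π (i, j)) = T1 i j for all (i, j). -/
/-- Combinatorial form of the maximal invariance theorem: two tables differ by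
an independent row/column permutation iff there is a type-preserving,
incidence-preserving, label-preserving pair of relabelings between their table
hypergraphs. -/
theorem maximal_invariance_combinatorial {n m : ℕ} {α : Type*}
    (T1 T2 : Fin n → Fin m → α) :
    (∃ (σ : Equiv.Perm (Fin n)) (τ : Equiv.Perm (Fin m)),
        T2 = tableSMul (σ, τ) T1) ↔
    (∃ (π : (Fin n × Fin m) ≃ (Fin n × Fin m))
        (ρ : (Fin n ⊕ (Fin m ⊕ Unit)) ≃ (Fin n ⊕ (Fin m ⊕ Unit))),
      (∀ i : Fin n, ∃ i' : Fin n, ρ (Sum.inl i) = Sum.inl i') ∧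
      (∀ j : Fin m, ∃ j' : Fin m,
        ρ (Sum.inr (Sum.inl j)) = Sum.inr (Sum.inl j')) ∧
      (∀ (v : Fin n × Fin m) (e : Fin n ⊕ (Fin m ⊕ Unit)),
        Inc (π v) (ρ e) ↔ Inc v e) ∧
      (∀ (i : Fin n) (j : Fin m),
        T2 (π (i, j)).1 (π (i, j)).2 = T1 i j)) := by
  constructor
  · rintro ⟨σ, τ, rfl⟩
    refine ⟨σ.prodCongr τ, (σ.sumCongr (τ.sumCongr (Equiv.refl Unit))),
      fun i => ⟨σ i, rfl⟩, fun j => ⟨τ j, rfl⟩, ?_, ?_⟩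
    · rintro ⟨i, j⟩ (i' | j' | u) <;>
        simp [Inc, Equiv.prodCongr_apply, Equiv.sumCongr_apply]
    · intro i j
      simp [tableSMul, Equiv.prodCongr_apply]
  · rintro ⟨π, ρ, h1, h2, hinc, hT⟩
    -- build σ
    have hσ : ∀ i, ∃ i', ρ (Sum.inl i) = Sum.inl i' := h1
    choose f hf using h1
    choose g hg using h2
    have hfinj : Function.Injective f := by
      intro a b hab
      have : ρ (Sum.inl a) = ρ (Sum.inl b) := by rw [hf, hf, hab]
      exact Sum.inl_injective (ρ.injective this)
    have hginj : Function.Injective g := by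
      intro a b hab
      have : ρ (Sum.inr (Sum.inl a)) = ρ (Sum.inr (Sum.inl b)) := by
        rw [hg, hg, hab]
      exact Sum.inl_injective (Sum.inr_injective (ρ.injective this))
    let σ : Equiv.Perm (Fin n) := Equiv.ofBijective f (Finite.injective_iff_bijective.mp hfinj)
    let τ : Equiv.Perm (Fin m) := Equiv.ofBijective g (Finite.injective_iff_bijective.mp hginj)
    have hπ : ∀ i j, π (i, j) = (σ i, τ j) := by
      intro i j
      have h1' := (hinc (i, j) (Sum.inl i)).mpr rfl
      have h2' := (hinc (i, j) (Sum.inr (Sum.inl j))).mpr rfl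
      rw [hf] at h1'
      rw [hg] at h2'
      simp only [Inc] at h1' h2'
      exact Prod.ext h1' h2'
    refine ⟨σ, τ, ?_⟩
    funext i j
    have := hT (σ⁻¹ i) (τ⁻¹ j)
    rw [hπ] at this
    simpa [tableSMul] using this
end
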